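/- Tail bound for the maximum of closed *-clusters: with site percolation at parameter q as above and distinct closed sites u_1, ..., u_M, for every x ∈ ℕ, P(max{|C(u_1)|, ..., |C(u_M)|} < x) ≥ 1 − M·(3^d(1−q))^{⌊log_{3^d} x⌋}. -/

import Mathlib

open scoped BigOperators ENNReal
open MeasureTheory ProbabilityTheory

/-- Sites of the lattice `ℤ^d`. -/
abbrev Site (d : ℕ) := Fin d → ℤ

/-- `*`-adjacency on `ℤ^d`. -/
def adjStar {d : ℕ} (v w : Site d) : Prop := v ≠ w ∧ ∀ i, |v i - w i| ≤ 1

/-- The `*`-connected cluster of closed sites containing `u` (in the configuration `ω`,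
a site `v` is open iff `X v ω = true`). -/
def cluster {d : ℕ} {Ω : Type*} (X : Site d → Ω → Bool) (u : Site d) (ω : Ω) :
    Set (Site d) :=
  {v | ∃ (k : ℕ) (p : Fin (k + 1) → Site d), p 0 = u ∧ p (Fin.last k) = v ∧
    (∀ i, X (p i) ω = false) ∧ ∀ i : Fin k, adjStar (p i.castSucc) (p i.succ)}

/-!
If `|C(u)| ≥ (3^d)^n`, the cluster cannot fit in the box of sup-radius `n - 1` around `u`, which
has only `(2n - 1)^d` sites. A closed `*`-path from `u` to a site outside that box, made
self-avoiding, has at least `n` steps, so its first `n` steps form a self-avoiding walk from `u`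
whose `n` sites after `u` are closed. There are at most `(3^d)^n` such walks, and by independence
each is closed at those sites with probability at most `(1 - q)^n`. A union bound over the walks
and over `u_1, …, u_M` gives the claim, with `n = ⌊log_{3^d} x⌋`.
-/

lemma measure_preimage_false_le {Ω : Type*} [MeasurableSpace Ω] {μ : Measure Ω}
    [IsProbabilityMeasure μ] {Y : Ω → Bool} (hY : Measurable Y) {q : ℝ}
    (hq : μ {ω | Y ω = true} = ENNReal.ofReal q) :
    μ (Y ⁻¹' {false}) ≤ ENNReal.ofReal (1 - q) := by
  have hcompl : Y ⁻¹' {false} = {ω | Y ω = true}ᶜ := by ext; simp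
  rw [hcompl, prob_compl_eq_one_sub (s := {ω | Y ω = true}) (hY (measurableSet_singleton true)),
    hq]
  rcases le_or_gt 0 q with hq0 | hq0
  · rw [ENNReal.ofReal_sub 1 hq0, ENNReal.ofReal_one]
  · exact tsub_le_self.trans (ENNReal.one_le_ofReal.mpr (by linarith))

lemma one_sub_le_measure_of_measure_compl_le {Ω : Type*} [MeasurableSpace Ω] {μ : Measure Ω}
    [IsProbabilityMeasure μ] {s : Set Ω} {b : ℝ≥0∞} (h : μ sᶜ ≤ b) : 1 - b ≤ μ s :=
  (tsub_le_tsub_left h 1).trans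
    (tsub_le_iff_right.mpr (measure_univ (μ := μ) ▸ measure_univ_le_add_compl s))

lemma measure_forall_closed_le {ι Ω : Type*} [MeasurableSpace Ω] {μ : Measure Ω}
    {X : ι → Ω → Bool} {P : ℝ≥0∞} (hindep : iIndepFun X μ)
    (hclosed : ∀ v, μ (X v ⁻¹' {false}) ≤ P) {n : ℕ} {f : Fin n → ι}
    (hf : Function.Injective f) : μ {ω | ∀ j, X (f j) ω = false} ≤ P ^ n := by
  classical
  have hprod := (hindep.precomp hf).measure_inter_preimage_eq_mul Finset.univ
    (sets := fun _ => {false}) (fun _ _ => measurableSet_singleton false)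
  calc μ {ω | ∀ j, X (f j) ω = false} = ∏ j, μ (X (f j) ⁻¹' {false}) := by
        rw [← hprod]
        congr 1
        ext ω
        simp
    _ ≤ ∏ _j : Fin n, P := Finset.prod_le_prod' fun j _ => hclosed (f j)
    _ = P ^ n := by simp

lemma adjStar_symm {d : ℕ} {v w : Site d} (h : adjStar v w) : adjStar w v :=
  ⟨h.1.symm, fun i => abs_sub_comm (v i) (w i) ▸ h.2 i⟩

lemma Int.eq_of_intCast_zmod_three_eq {a b : ℤ} (ha : |a| ≤ 1) (hb : |b| ≤ 1)
    (h : (a : ZMod 3) = b) : a = b := by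
  rw [ZMod.intCast_eq_intCast_iff'] at h
  rw [abs_le] at ha hb
  omega

def selfAvoidingWalks {d : ℕ} (u : Site d) (n : ℕ) : Set (Fin (n + 1) → Site d) :=
  {p | p 0 = u ∧ Function.Injective p ∧ ∀ j : Fin n, adjStar (p j.castSucc) (p j.succ)}

/-- A `*`-step lies in `{-1, 0, 1}^d`, so it is determined by its residue mod 3. -/
def stepCode {d n : ℕ} (p : Fin (n + 1) → Site d) : Fin n → Fin d → ZMod 3 :=
  fun j i => ((p j.castSucc i - p j.succ i : ℤ) : ZMod 3)

lemma stepCode_injOn {d : ℕ} (u : Site d) (n : ℕ) :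
    Set.InjOn stepCode (selfAvoidingWalks u n) := by
  rintro p ⟨hp0, -, hp⟩ p' ⟨hp'0, -, hp'⟩ hcode
  funext j
  induction j using Fin.induction with
  | zero => rw [hp0, hp'0]
  | succ j ih =>
    funext i
    have hstep : p j.castSucc i - p j.succ i = p' j.castSucc i - p' j.succ i :=
      Int.eq_of_intCast_zmod_three_eq ((hp j).2 i) ((hp' j).2 i) (congrFun (congrFun hcode j) i)
    rw [ih] at hstep
    linarith

lemma selfAvoidingWalks_finite {d : ℕ} (u : Site d) (n : ℕ) :
    (selfAvoidingWalks u n).Finite :=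
  Set.Finite.of_finite_image (Set.toFinite _) (stepCode_injOn u n)

lemma ncard_selfAvoidingWalks_le {d : ℕ} (u : Site d) (n : ℕ) :
    (selfAvoidingWalks u n).ncard ≤ (3 ^ d) ^ n := by
  calc (selfAvoidingWalks u n).ncard
      ≤ (Set.univ : Set (Fin n → Fin d → ZMod 3)).ncard :=
        Set.ncard_le_ncard_of_injOn stepCode (fun _ _ => Set.mem_univ _) (stepCode_injOn u n)
    _ = (3 ^ d) ^ n := by simp [Set.ncard_univ]

/-- Closed sites, joined by `*`-adjacency; `cluster X u ω` is the component of `u` if `u` is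
closed and empty otherwise. -/
def closedGraph {d : ℕ} {Ω : Type*} (X : Site d → Ω → Bool) (ω : Ω) :
    SimpleGraph (Site d) where
  Adj v w := adjStar v w ∧ X v ω = false ∧ X w ω = false
  symm.symm _ _ h := ⟨adjStar_symm h.1, h.2.2, h.2.1⟩
  loopless.irrefl _ h := h.1.1 rfl

@[simp]
lemma closedGraph_adj {d : ℕ} {Ω : Type*} {X : Site d → Ω → Bool} {ω : Ω} {v w : Site d} :
    (closedGraph X ω).Adj v w ↔ adjStar v w ∧ X v ω = false ∧ X w ω = false :=
  Iff.rfl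

section Extraction

variable {d : ℕ} {Ω : Type*} (X : Site d → Ω → Bool) (ω : Ω)

lemma reachable_of_mem_cluster {u v : Site d} (hv : v ∈ cluster X u ω) :
    (closedGraph X ω).Reachable u v := by
  obtain ⟨k, p, rfl, rfl, hclosed, hadj⟩ := hv
  suffices ∀ j, (closedGraph X ω).Reachable (p 0) (p j) from this _
  intro j
  induction j using Fin.induction with
  | zero => rfl
  | succ j ih => exact ih.trans (closedGraph_adj.mpr ⟨hadj j, hclosed _, hclosed _⟩).reachable

lemma abs_sub_le_length {u v : Site d} (w : (closedGraph X ω).Walk u v) (i : Fin d) :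
    |v i - u i| ≤ w.length := by
  induction w with
  | nil => simp
  | @cons a b c h w ih =>
    calc |c i - a i| ≤ |c i - b i| + |b i - a i| := abs_sub_le _ _ _
      _ ≤ w.length + 1 :=
        add_le_add ih (abs_sub_comm (b i) (a i) ▸ (closedGraph_adj.mp h).1.2 i)
      _ = (w.cons h).length := by simp

lemma exists_far_of_le_encard (hd : 0 < d) (S : Set (Site d)) (u : Site d) (n : ℕ)
    (hS : (((3 ^ d) ^ n : ℕ) : ℕ∞) ≤ S.encard) :
    ∃ v ∈ S, ∃ i, (n : ℤ) ≤ |v i - u i| := by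
  classical
  by_contra! hnear
  let box := Fintype.piFinset fun i => Finset.Ioo (u i - n) (u i + n)
  have hsub : S ⊆ box := fun v hv => by
    simp only [box, Finset.mem_coe, Fintype.mem_piFinset, Finset.mem_Ioo]
    intro i
    have := abs_lt.mp (hnear v hv i)
    omega
  have hbox : box.card < (3 ^ d) ^ n := by
    have hside (i : Fin d) : (Finset.Ioo (u i - n) (u i + n)).card = 2 * n - 1 := by
      rw [Int.card_Ioo]
      omega
    have hbern : 1 + n * 2 ≤ 3 ^ n := one_add_le_pow_of_two_add_nonneg (by norm_num) n
    rw [Fintype.card_piFinset, ← pow_mul, mul_comm, pow_mul]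
    simp only [hside, Finset.prod_const, Finset.card_univ, Fintype.card_fin]
    exact Nat.pow_lt_pow_left (by omega) hd.ne'
  have := (hS.trans (Set.encard_le_encard hsub)).trans_eq (Set.encard_coe_eq_coe_finsetCard box)
  exact absurd (Nat.cast_le.mp this) hbox.not_ge

lemma exists_selfAvoidingWalk_closed (hd : 0 < d) (u : Site d) (n : ℕ)
    (h : (((3 ^ d) ^ n : ℕ) : ℕ∞) ≤ (cluster X u ω).encard) :
    ∃ p ∈ selfAvoidingWalks u n, ∀ j : Fin n, X (p j.succ) ω = false := by
  obtain ⟨v, hv, i, hfar⟩ := exists_far_of_le_encard hd _ u n h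
  obtain ⟨w⟩ := reachable_of_mem_cluster X ω hv
  have hlen : n ≤ w.bypass.length := by exact_mod_cast hfar.trans (abs_sub_le_length X ω _ i)
  have hstep (j : Fin n) := closedGraph_adj.mp (w.bypass.adj_getVert_succ (i := j) (by omega))
  refine ⟨fun j => w.bypass.getVert j, ⟨w.bypass.getVert_zero, ?_, fun j => (hstep j).1⟩,
    fun j => (hstep j).2.2⟩
  intro j j' hjj'
  exact Fin.ext (w.bypass_isPath.getVert_injOn (by simp; omega) (by simp; omega) hjj')

end Extraction

section Probability

variable {d : ℕ} {Ω : Type*} [MeasurableSpace Ω] {μ : Measure Ω} {X : Site d → Ω → Bool}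
  {P : ℝ≥0∞}

lemma measure_pow_le_encard_cluster_le [IsProbabilityMeasure μ] (hindep : iIndepFun X μ)
    (hclosed : ∀ v, μ (X v ⁻¹' {false}) ≤ P) (hd : 0 < d) (u : Site d) (n : ℕ) :
    μ {ω | (((3 ^ d) ^ n : ℕ) : ℕ∞) ≤ (cluster X u ω).encard} ≤ (3 ^ d * P) ^ n := by
  have hW := selfAvoidingWalks_finite u n
  have hsub : {ω | (((3 ^ d) ^ n : ℕ) : ℕ∞) ≤ (cluster X u ω).encard} ⊆
      ⋃ p ∈ hW.toFinset, {ω | ∀ j : Fin n, X (p j.succ) ω = false} := fun ω hω => by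
    obtain ⟨p, hp, hclosed⟩ := exists_selfAvoidingWalk_closed X ω hd u n hω
    exact Set.mem_biUnion (hW.mem_toFinset.mpr hp) hclosed
  calc μ {ω | (((3 ^ d) ^ n : ℕ) : ℕ∞) ≤ (cluster X u ω).encard}
      ≤ ∑ p ∈ hW.toFinset, μ {ω | ∀ j : Fin n, X (p j.succ) ω = false} :=
        (measure_mono hsub).trans (measure_biUnion_finset_le _ _)
    _ ≤ ∑ _p ∈ hW.toFinset, P ^ n := Finset.sum_le_sum fun p hp =>
        measure_forall_closed_le hindep hclosed
          ((hW.mem_toFinset.mp hp).2.1.comp (Fin.succ_injective n))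
    _ ≤ (3 ^ d) ^ n * P ^ n := by
        rw [Finset.sum_const, nsmul_eq_mul, ← Set.ncard_eq_toFinset_card _ hW]
        gcongr
        exact_mod_cast ncard_selfAvoidingWalks_le u n
    _ = (3 ^ d * P) ^ n := (mul_pow _ _ _).symm

lemma measure_le_encard_cluster_le [IsProbabilityMeasure μ] (hindep : iIndepFun X μ)
    (hclosed : ∀ v, μ (X v ⁻¹' {false}) ≤ P) (u : Site d) (x : ℕ) :
    μ {ω | (x : ℕ∞) ≤ (cluster X u ω).encard} ≤ (3 ^ d * P) ^ Nat.log (3 ^ d) x := by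
  set n := Nat.log (3 ^ d) x
  rcases Nat.eq_zero_or_pos n with hn | hn
  · rw [hn, pow_zero]
    exact prob_le_one
  have hd : 0 < d := by
    by_contra! hd
    simp [n, Nat.le_zero.mp hd] at hn
  have hx : (3 ^ d) ^ n ≤ x := Nat.pow_log_le_self _ (by rintro rfl; simp [n] at hn)
  refine (measure_mono fun ω (hω : (x : ℕ∞) ≤ _) => ?_).trans
    (measure_pow_le_encard_cluster_le hindep hclosed hd u n)
  exact (Nat.cast_le.mpr hx).trans hω

lemma measure_exists_le_encard_cluster_le [IsProbabilityMeasure μ] (hindep : iIndepFun X μ)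
    (hclosed : ∀ v, μ (X v ⁻¹' {false}) ≤ P) {M : ℕ} (u : Fin M → Site d) (x : ℕ) :
    μ {ω | ∃ i, (x : ℕ∞) ≤ (cluster X (u i) ω).encard}
      ≤ M * (3 ^ d * P) ^ Nat.log (3 ^ d) x := by
  calc μ {ω | ∃ i, (x : ℕ∞) ≤ (cluster X (u i) ω).encard}
      ≤ ∑ i, μ {ω | (x : ℕ∞) ≤ (cluster X (u i) ω).encard} := by
        simpa only [Set.ofPred_exists] using measure_iUnion_fintype_le μ _
    _ ≤ ∑ _i : Fin M, (3 ^ d * P) ^ Nat.log (3 ^ d) x :=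
        Finset.sum_le_sum fun i _ => measure_le_encard_cluster_le hindep hclosed (u i) x
    _ = M * (3 ^ d * P) ^ Nat.log (3 ^ d) x := by simp

end Probability

theorem max_cluster_size_bound_general {d : ℕ}
    {Ω : Type*} [MeasurableSpace Ω] (μ : Measure Ω) [IsProbabilityMeasure μ]
    (q : ℝ)
    (X : Site d → Ω → Bool) (hXmeas : ∀ v, Measurable (X v))
    (hindep : iIndepFun X μ)
    (hdist : ∀ v, μ {ω | X v ω = true} = ENNReal.ofReal q)
    (M : ℕ) (u : Fin M → Site d)
    (x : ℕ) :
    ENNReal.ofReal (1 - (M : ℝ) * ((3 : ℝ) ^ d * (1 - q)) ^ (Nat.log (3 ^ d) x))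
      ≤ μ {ω | ∀ i : Fin M, (cluster X (u i) ω).encard < (x : ℕ∞)} := by
  have h1q : 0 ≤ 1 - q := sub_nonneg.mpr (ENNReal.ofReal_le_one.mp (hdist 0 ▸ prob_le_one))
  have hbad := measure_exists_le_encard_cluster_le hindep
    (fun v => measure_preimage_false_le (hXmeas v) (hdist v)) u x
  have hcompl : {ω | ∀ i : Fin M, (cluster X (u i) ω).encard < (x : ℕ∞)}ᶜ
      = {ω | ∃ i, (x : ℕ∞) ≤ (cluster X (u i) ω).encard} := by ext; simp
  rw [← hcompl] at hbad
  convert one_sub_le_measure_of_measure_compl_le hbad using 1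
  rw [ENNReal.ofReal_sub _ (by positivity), ENNReal.ofReal_one,
    ENNReal.ofReal_mul (Nat.cast_nonneg M), ENNReal.ofReal_natCast,
    ENNReal.ofReal_pow (by positivity), ENNReal.ofReal_mul (by positivity),
    ENNReal.ofReal_pow zero_le_three, ENNReal.ofReal_ofNat]

/-- Tail bound for the maximum of closed `*`-clusters: for i.i.d. site
percolation at parameter `q` and distinct sites `u_1, …, u_M`, for every `x ∈ ℕ`,
`P(max_i |C(u_i)| < x) ≥ 1 − M·(3^d(1−q))^{⌊log_{3^d} x⌋}`. -/
theorem max_cluster_size_bound {d : ℕ} (hd : 0 < d)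
    {Ω : Type*} [MeasurableSpace Ω] (μ : Measure Ω) [IsProbabilityMeasure μ]
    (q : ℝ) (hq1 : 1 - (3 * (d : ℝ))⁻¹ < q) (hq2 : q < 1)
    (hq3 : (3 : ℝ) ^ d * (1 - q) < 1)
    (X : Site d → Ω → Bool) (hXmeas : ∀ v, Measurable (X v))
    (hindep : iIndepFun X μ)
    (hdist : ∀ v, μ {ω | X v ω = true} = ENNReal.ofReal q)
    (M : ℕ) (u : Fin M → Site d) (hu : Function.Injective u)
    (x : ℕ) :
    ENNReal.ofReal (1 - (M : ℝ) * ((3 : ℝ) ^ d * (1 - q)) ^ (Nat.log (3 ^ d) x))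
      ≤ μ {ω | ∀ i : Fin M, (cluster X (u i) ω).encard < (x : ℕ∞)} :=
  max_cluster_size_bound_general μ q X hXmeas hindep hdist M u x
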